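/- Let K and L be finite fields equipped with Algebra K L and Module.finrank K L = 3, set q = Fintype.card K, and let α ∈ L. If the family (α, α^q, α^(q^2)) is linearly independent over K, then the 3×3 matrix over L with rows (α, α^q, α^(q^2)), (α^q, α^(q^2), α), (α^(q^2), α, α^q) has nonzero determinant (equivalently, it is invertible). -/

import Mathlib

/-!
Writing `φ` for the Frobenius `x ↦ x ^ q` of `L/K`, the `(i, j)` entry of the matrix is
`φ ^ j (α ^ q ^ i)`, and `φ⁰, φ¹, φ²` are distinct `K`-algebra maps `L → L`. A vanishing
determinant gives a nontrivial `L`-linear relation between them on the `K`-basis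
`α, α ^ q, α ^ q ^ 2`, hence on all of `L`, contradicting Dedekind's independence of characters.
-/

theorem Module.Basis.det_algHom_apply_ne_zero {K L E ι : Type*} [Field K] [Semiring L]
    [Algebra K L] [Field E] [Algebra K E] [Fintype ι] [DecidableEq ι] (b : Module.Basis ι K L)
    {σ : ι → L →ₐ[K] E} (hσ : Function.Injective σ) :
    (Matrix.of fun i j => σ j (b i)).det ≠ 0 := by
  intro hdet
  obtain ⟨c, hc, hMc⟩ := Matrix.exists_mulVec_eq_zero_iff.mpr hdet
  have hsum : ∑ j, c j • (σ j).toLinearMap = 0 := b.ext fun i => by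
    simpa [Matrix.mulVec, dotProduct, mul_comm] using congrFun hMc i
  exact hc <| funext <| Fintype.linearIndependent_iff.mp
    ((linearIndependent_algHom_toLinearMap K L E).comp σ hσ) c hsum

theorem FiniteField.det_pow_card_pow_add_ne_zero {K L : Type*} [Field K] [Fintype K] [Field L]
    [Finite L] [Algebra K L] {n : ℕ} (hn : Module.finrank K L = n) {α : L}
    (hli : LinearIndependent K fun i : Fin n => α ^ Fintype.card K ^ (i : ℕ)) :
    (Matrix.of fun i j : Fin n => α ^ Fintype.card K ^ ((i : ℕ) + j)).det ≠ 0 := by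
  let φ := frobeniusAlgEquivOfAlgebraic K L
  have hφ : orderOf φ = n := hn ▸ orderOf_frobeniusAlgEquivOfAlgebraic K L
  have : Nonempty (Fin n) := ⟨⟨0, hn ▸ Module.finrank_pos⟩⟩
  let b := basisOfLinearIndependentOfCardEqFinrank hli (by simp [hn])
  let σ : Fin n → L →ₐ[K] L := fun j => (φ ^ (j : ℕ) : L ≃ₐ[K] L)
  have hσ : Function.Injective σ := fun i j hij => Fin.ext <|
    pow_injOn_Iio_orderOf (by simp [hφ]) (by simp [hφ]) (AlgEquiv.coe_toAlgHom_injective hij)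
  convert b.det_algHom_apply_ne_zero hσ using 2
  ext i j
  simp [σ, b, φ, AlgEquiv.coe_pow, coe_frobeniusAlgEquivOfAlgebraic_iterate, ← pow_mul, pow_add]
  ring

theorem stmt_7 (K L : Type*) [Field K] [Fintype K] [Field L] [Fintype L] [Algebra K L]
    (hrank : Module.finrank K L = 3) (α : L)
    (hli : LinearIndependent K ![α, α ^ Fintype.card K, α ^ Fintype.card K ^ 2]) :
    (Matrix.of ![![α, α ^ Fintype.card K, α ^ Fintype.card K ^ 2],
                 ![α ^ Fintype.card K, α ^ Fintype.card K ^ 2, α],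
                 ![α ^ Fintype.card K ^ 2, α, α ^ Fintype.card K]] :
        Matrix (Fin 3) (Fin 3) L).det ≠ 0 := by
  have hα3 : α ^ Fintype.card K ^ 3 = α := by
    rw [← hrank, ← Module.card_eq_pow_finrank, FiniteField.pow_card]
  have hα4 : α ^ Fintype.card K ^ 4 = α ^ Fintype.card K := by rw [pow_succ, pow_mul, hα3]
  have hconj : ![α, α ^ Fintype.card K, α ^ Fintype.card K ^ 2] =
      fun i : Fin 3 => α ^ Fintype.card K ^ (i : ℕ) := by
    ext i; fin_cases i <;> simp
  convert FiniteField.det_pow_card_pow_add_ne_zero hrank (hconj ▸ hli) using 2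
  ext i j; fin_cases i <;> fin_cases j <;> simp [hα3, hα4]
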